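/- (Bounded difference / McDiarmid inequality) Let f : X^m → ℝ satisfy the bounded differences property with constants c₁,...,c_m: changing the i-th coordinate changes f by at most cᵢ. If X = (x₁,...,x_m) has independent coordinates, then for every ε > 0, P(f(X) - E[f(X)] > ε) ≤ exp(-2ε² / Σᵢ cᵢ²). -/

import Mathlib

open MeasureTheory ProbabilityTheory Real

lemma mcd_D_pos {p : ℝ} (hp0 : 0 ≤ p) (hp1 : p ≤ 1) (u : ℝ) :
    0 < 1 - p + p * Real.exp u := by
  rcases eq_or_lt_of_le hp1 with h | h
  · simp [← h]; positivity
  · have : 0 < 1 - p := by linarith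
    nlinarith [exp_pos u, mul_nonneg hp0 (exp_pos u).le]

lemma mcd_key {p : ℝ} (hp0 : 0 ≤ p) (hp1 : p ≤ 1) (u : ℝ) :
    1 - p + p * Real.exp u ≤ Real.exp (p * u + u ^ 2 / 8) := by
  have hD := mcd_D_pos hp0 hp1
  set F : ℝ → ℝ := fun u => p * u + u ^ 2 / 8 - Real.log (1 - p + p * Real.exp u) with hF
  set F' : ℝ → ℝ := fun u => p + u / 4 - p * Real.exp u / (1 - p + p * Real.exp u) with hF'
  have hDerivD : ∀ u : ℝ, HasDerivAt (fun u => 1 - p + p * Real.exp u) (p * Real.exp u) u := by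
    intro u
    simpa using ((Real.hasDerivAt_exp u).const_mul p).const_add (1 - p)
  have hDerivF : ∀ u : ℝ, HasDerivAt F (F' u) u := by
    intro u
    have h1 : HasDerivAt (fun u : ℝ => p * u + u ^ 2 / 8) (p + u * 2 / 8) u := by
      have := ((hasDerivAt_id u).const_mul p).add ((hasDerivAt_pow 2 u).div_const 8)
      refine this.congr_deriv ?_
      norm_num
      ring
    have h2 : HasDerivAt (fun u => Real.log (1 - p + p * Real.exp u))
        (p * Real.exp u / (1 - p + p * Real.exp u)) u := by
      have := (Real.hasDerivAt_log (hD u).ne').comp u (hDerivD u)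
      refine this.congr_deriv ?_
      field_simp
    have := h1.sub h2
    refine this.congr_deriv ?_
    ring
  have hDerivF' : ∀ u : ℝ, HasDerivAt F'
      (1 / 4 - (p * Real.exp u * (1 - p + p * Real.exp u) - p * Real.exp u * (p * Real.exp u)) /
        (1 - p + p * Real.exp u) ^ 2) u := by
    intro u
    have h1 : HasDerivAt (fun u : ℝ => p + u / 4) (1 / 4) u := by
      simpa using ((hasDerivAt_id u).div_const 4).const_add p
    have h2 : HasDerivAt (fun u => p * Real.exp u / (1 - p + p * Real.exp u))
        ((p * Real.exp u * (1 - p + p * Real.exp u) - p * Real.exp u * (p * Real.exp u)) /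
          (1 - p + p * Real.exp u) ^ 2) u :=
      ((Real.hasDerivAt_exp u).const_mul p).div (hDerivD u) (hD u).ne'
    exact h1.sub h2
  have hF''nonneg : ∀ u : ℝ,
      0 ≤ 1 / 4 - (p * Real.exp u * (1 - p + p * Real.exp u) - p * Real.exp u * (p * Real.exp u)) /
        (1 - p + p * Real.exp u) ^ 2 := by
    intro u
    rw [sub_nonneg, div_le_iff₀ (pow_pos (hD u) 2)]
    nlinarith [sq_nonneg (1 - p - p * Real.exp u), exp_pos u]
  have hmonoF' : Monotone F' := by
    refine monotone_of_deriv_nonneg (fun u => (hDerivF' u).differentiableAt) (fun u => ?_)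
    rw [(hDerivF' u).deriv]
    exact hF''nonneg u
  have hF'0 : F' 0 = 0 := by simp [hF']
  have hF0 : F 0 = 0 := by simp [hF]
  have hFnonneg : ∀ u : ℝ, 0 ≤ F u := by
    intro u
    rcases le_total 0 u with h | h
    · have hmono : MonotoneOn F (Set.Ici (0:ℝ)) := by
        refine monotoneOn_of_deriv_nonneg (convex_Ici 0)
          (fun x _ => (hDerivF x).differentiableAt.continuousAt.continuousWithinAt)
          (fun x _ => (hDerivF x).differentiableAt.differentiableWithinAt) (fun x hx => ?_)
        rw [(hDerivF x).deriv, ← hF'0]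
        exact hmonoF' (le_of_lt (by simpa using hx))
      have := hmono (Set.self_mem_Ici) (Set.mem_Ici.2 h) h
      linarith [hF0 ▸ this]
    · have hmono : AntitoneOn F (Set.Iic (0:ℝ)) := by
        refine antitoneOn_of_deriv_nonpos (convex_Iic 0)
          (fun x _ => (hDerivF x).differentiableAt.continuousAt.continuousWithinAt)
          (fun x _ => (hDerivF x).differentiableAt.differentiableWithinAt) (fun x hx => ?_)
        rw [(hDerivF x).deriv, ← hF'0]
        exact hmonoF' (le_of_lt (by simpa using hx))
      have := hmono (Set.mem_Iic.2 h) Set.self_mem_Iic h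
      linarith [hF0 ▸ this]
  have := hFnonneg u
  have hlog : Real.log (1 - p + p * Real.exp u) ≤ p * u + u ^ 2 / 8 := by
    simp only [hF] at this; linarith
  calc 1 - p + p * Real.exp u = Real.exp (Real.log (1 - p + p * Real.exp u)) :=
        (Real.exp_log (hD u)).symm
    _ ≤ _ := Real.exp_le_exp.2 hlog


lemma mcd_hoeffding {X : Type*} [MeasurableSpace X] [Nonempty X] (ν : Measure X)
    [IsProbabilityMeasure ν] (g : X → ℝ) (hg : Measurable g) {c : ℝ}
    (hosc : ∀ x y, |g x - g y| ≤ c) (t : ℝ) :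
    ∫ x, Real.exp (t * g x) ∂ν ≤ Real.exp (t * ∫ x, g x ∂ν + t ^ 2 * c ^ 2 / 8) := by
  obtain ⟨x₀⟩ := ‹Nonempty X›
  have hc : 0 ≤ c := by simpa using hosc x₀ x₀
  have hgbd : ∀ x, ‖g x‖ ≤ |g x₀| + c := by
    intro x
    have := hosc x x₀
    rw [Real.norm_eq_abs]
    calc |g x| = |(g x - g x₀) + g x₀| := by ring_nf
      _ ≤ |g x - g x₀| + |g x₀| := abs_add_le _ _
      _ ≤ c + |g x₀| := by linarith
      _ = |g x₀| + c := by ring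
  have hgint : Integrable g ν :=
    ⟨hg.aestronglyMeasurable, HasFiniteIntegral.of_bounded (ae_of_all _ hgbd)⟩
  set K := ∫ x, g x ∂ν with hK
  have hbddA : BddAbove (Set.range g) := by
    refine ⟨g x₀ + c, fun y hy => ?_⟩
    obtain ⟨x, rfl⟩ := hy
    have := (abs_le.1 (hosc x x₀)).2
    linarith
  set M := ⨆ x, g x with hM
  have hgM : ∀ x, g x ≤ M := fun x => le_ciSup hbddA x
  have hMg : ∀ x, M - c ≤ g x := by
    intro x
    have : M ≤ g x + c := ciSup_le fun x' => by
      have := (abs_le.1 (hosc x' x)).2; linarith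
    linarith
  have hKM : K ≤ M := by
    have := integral_mono hgint (integrable_const M) hgM
    simpa [hK] using this
  have hMK : M - c ≤ K := by
    have := integral_mono (integrable_const (M - c)) hgint hMg
    simpa [hK] using this
  rcases eq_or_lt_of_le hc with hc0 | hc0
  · -- c = 0 : g is constant
    have hconst : ∀ x, g x = M := fun x => le_antisymm (hgM x) (by have := hMg x; linarith [hc0])
    have hKM' : K = M := le_antisymm hKM (by linarith)
    rw [show (fun x => Real.exp (t * g x)) = fun _ => Real.exp (t * M) by
      funext x; rw [hconst x]]
    simp [← hc0, hKM']
  · -- c > 0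
    set E1 := Real.exp (t * (M - c)) with hE1
    set E2 := Real.exp (t * M) with hE2
    have hcne : c ≠ 0 := ne_of_gt hc0
    set p := (K - (M - c)) / c with hp
    have hp0 : 0 ≤ p := by
      apply div_nonneg _ hc; linarith
    have hp1 : p ≤ 1 := by
      rw [hp, div_le_one hc0]; linarith
    have hpt : ∀ x, Real.exp (t * g x) ≤ ((M - g x) * E1 + (g x - (M - c)) * E2) / c := by
      intro x
      have key := convexOn_exp.2 (Set.mem_univ (t * (M - c))) (Set.mem_univ (t * M))
        (show (0:ℝ) ≤ (M - g x) / c from div_nonneg (by linarith [hgM x]) hc)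
        (show (0:ℝ) ≤ (g x - (M - c)) / c from div_nonneg (by linarith [hMg x]) hc)
        (show (M - g x) / c + (g x - (M - c)) / c = 1 by field_simp; ring)
      simp only [smul_eq_mul] at key
      have harg : (M - g x) / c * (t * (M - c)) + (g x - (M - c)) / c * (t * M) = t * g x := by
        field_simp; ring
      rw [harg] at key
      calc Real.exp (t * g x) ≤ (M - g x) / c * E1 + (g x - (M - c)) / c * E2 := key
        _ = ((M - g x) * E1 + (g x - (M - c)) * E2) / c := by ring
    have hlint : Integrable (fun x => Real.exp (t * g x)) ν := by
      refine ⟨(Real.measurable_exp.comp (hg.const_mul t)).aestronglyMeasurable,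
        HasFiniteIntegral.of_bounded (C := Real.exp (|t| * (|g x₀| + c))) (ae_of_all _ fun x => ?_)⟩
      rw [Real.norm_eq_abs, abs_exp]
      apply Real.exp_le_exp.2
      calc t * g x ≤ |t * g x| := le_abs_self _
        _ = |t| * |g x| := abs_mul _ _
        _ ≤ |t| * (|g x₀| + c) := by
            apply mul_le_mul_of_nonneg_left _ (abs_nonneg t)
            simpa [Real.norm_eq_abs] using hgbd x
    have hint1 : Integrable (fun x => (M - g x) * E1) ν :=
      ((integrable_const M).sub hgint).mul_const E1
    have hint2 : Integrable (fun x => (g x - (M - c)) * E2) ν :=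
      (hgint.sub (integrable_const (M - c))).mul_const E2
    have hrint : Integrable (fun x => ((M - g x) * E1 + (g x - (M - c)) * E2) / c) ν :=
      (hint1.add hint2).div_const c
    have hmono := integral_mono hlint hrint hpt
    have hrval : ∫ x, ((M - g x) * E1 + (g x - (M - c)) * E2) / c ∂ν
        = ((M - K) * E1 + (K - (M - c)) * E2) / c := by
      rw [integral_div, integral_add hint1 hint2, integral_mul_const, integral_mul_const,
        integral_sub (integrable_const M) hgint, integral_sub hgint (integrable_const (M - c)),
        integral_const]
      simp [hK]
    rw [hrval] at hmono
    refine hmono.trans ?_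
    have hE2E1 : E2 = E1 * Real.exp (t * c) := by
      rw [hE1, hE2, ← Real.exp_add]; ring_nf
    have hsplit : ((M - K) * E1 + (K - (M - c)) * E2) / c
        = E1 * (1 - p + p * Real.exp (t * c)) := by
      rw [hE2E1, hp]; field_simp; ring
    rw [hsplit]
    calc E1 * (1 - p + p * Real.exp (t * c))
        ≤ E1 * Real.exp (p * (t * c) + (t * c) ^ 2 / 8) := by
          apply mul_le_mul_of_nonneg_left (mcd_key hp0 hp1 (t * c)) (Real.exp_nonneg _)
      _ = Real.exp (t * (M - c) + (p * (t * c) + (t * c) ^ 2 / 8)) := by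
          rw [hE1, ← Real.exp_add]
      _ = Real.exp (t * K + t ^ 2 * c ^ 2 / 8) := by
          congr 1
          rw [hp]; field_simp; ring

lemma mcd_osc_finset {m : ℕ} {X : Type*} (f : (Fin m → X) → ℝ) (c : Fin m → ℝ)
    (hbdd : ∀ (i : Fin m) (v : Fin m → X) (ξ : X), |f v - f (Function.update v i ξ)| ≤ c i)
    (s : Finset (Fin m)) : ∀ (v w : Fin m → X), (∀ i ∉ s, v i = w i) →
    |f v - f w| ≤ ∑ i ∈ s, c i := by
  induction s using Finset.induction_on with
  | empty =>
    intro v w hvw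
    have : v = w := funext fun i => hvw i (Finset.notMem_empty i)
    simp [this]
  | @insert a s ha ih =>
    intro v w hvw
    set w' := Function.update w a (v a) with hw'
    have hvw' : ∀ i ∉ s, v i = w' i := by
      intro i hi
      rcases eq_or_ne i a with rfl | hne
      · simp [hw']
      · rw [hw', Function.update_of_ne hne]
        exact hvw i (by simp [hne, hi])
    have h1 := ih v w' hvw'
    have h2 : |f w' - f w| ≤ c a := by
      have := hbdd a w' (w a)
      rwa [hw', Function.update_idem, Function.update_eq_self] at this
    calc |f v - f w| = |(f v - f w') + (f w' - f w)| := by ring_nf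
      _ ≤ |f v - f w'| + |f w' - f w| := abs_add_le _ _
      _ ≤ ∑ i ∈ s, c i + c a := add_le_add h1 h2
      _ = ∑ i ∈ insert a s, c i := by rw [Finset.sum_insert ha]; ring

lemma mcd_cons_eq {n : ℕ} {X : Type*} [MeasurableSpace X] (z : X × (Fin n → X)) :
    (MeasurableEquiv.piFinSuccAbove (fun _ : Fin (n + 1) => X) 0).symm z
      = Fin.cons z.1 z.2 := by
  simp [MeasurableEquiv.piFinSuccAbove, Fin.insertNthEquiv, Fin.insertNth_zero']

lemma mcd_cons_measurable {n : ℕ} {X : Type*} [MeasurableSpace X] :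
    Measurable (fun z : X × (Fin n → X) => (Fin.cons z.1 z.2 : Fin (n + 1) → X)) := by
  refine measurable_pi_iff.2 fun i => ?_
  refine Fin.cases ?_ (fun j => ?_) i
  · simpa only [Fin.cons_zero] using measurable_fst
  · simp only [Fin.cons_succ]; exact (measurable_pi_apply j).comp measurable_snd

lemma mcd_mgf (n : ℕ) : ∀ {X : Type*} [MeasurableSpace X] (ν : Fin n → Measure X)
    [∀ i, IsProbabilityMeasure (ν i)] (f : (Fin n → X) → ℝ), Measurable f →
    ∀ (c : Fin n → ℝ),
    (∀ (i : Fin n) (v : Fin n → X) (ξ : X), |f v - f (Function.update v i ξ)| ≤ c i) →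
    ∀ t : ℝ,
    ∫ v, Real.exp (t * f v) ∂(Measure.pi ν) ≤
      Real.exp (t * ∫ v, f v ∂(Measure.pi ν) + t ^ 2 * (∑ i, (c i) ^ 2) / 8) := by
  induction n with
  | zero =>
    intro X _ ν _ f hf c hbdd t
    haveI : IsProbabilityMeasure (Measure.pi ν) := inferInstance
    rw [show f = fun _ => f default from funext fun v => by rw [Subsingleton.elim v default]]
    simp
  | succ n ih =>
    intro X _ ν hprob f hf c hbdd t
    haveI : Nonempty X := by
      rcases isEmpty_or_nonempty X with h | h
      · have h1 : (ν 0) Set.univ = 1 := measure_univ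
        rw [Set.univ_eq_empty_iff.2 h, measure_empty] at h1
        exact absurd h1 (by norm_num)
      · exact h
    set ν' : Fin n → Measure X := fun j => ν j.succ with hν'
    haveI : ∀ j, IsProbabilityMeasure (ν' j) := fun j => hprob _
    set PP := Measure.pi ν with hPP
    set PP' := Measure.pi ν' with hPP'
    haveI : IsProbabilityMeasure PP := inferInstance
    haveI : IsProbabilityMeasure PP' := inferInstance
    haveI : IsProbabilityMeasure ((ν 0).prod PP') := inferInstance
    set e := MeasurableEquiv.piFinSuccAbove (fun _ : Fin (n + 1) => X) 0 with he
    have mp : MeasurePreserving e PP ((ν 0).prod PP') := by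
      have := measurePreserving_piFinSuccAbove ν 0
      simpa only [Fin.zero_succAbove] using this
    -- global bound on f
    set B := |f (fun _ => Classical.arbitrary X)| + ∑ i, c i with hB
    have hfb : ∀ v, |f v| ≤ B := by
      intro v
      have := mcd_osc_finset f c hbdd Finset.univ v (fun _ => Classical.arbitrary X)
        (fun i hi => absurd (Finset.mem_univ i) hi)
      calc |f v| = |(f v - f (fun _ => Classical.arbitrary X)) + f (fun _ => Classical.arbitrary X)| := by ring_nf
        _ ≤ |f v - f (fun _ => Classical.arbitrary X)| + |f (fun _ => Classical.arbitrary X)| := abs_add_le _ _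
        _ ≤ B := by rw [hB]; linarith
    -- transfer lemma
    have trans : ∀ G : (Fin (n + 1) → X) → ℝ,
        Integrable (fun z : X × (Fin n → X) => G (Fin.cons z.1 z.2)) ((ν 0).prod PP') →
        ∫ v, G v ∂PP = ∫ y, ∫ ξ, G (Fin.cons ξ y) ∂(ν 0) ∂PP' := by
      intro G hG
      have h1 : ∫ v, G v ∂PP = ∫ z, G (e.symm z) ∂((ν 0).prod PP') := by
        rw [← mp.integral_comp e.measurableEmbedding (fun z => G (e.symm z))]
        simp
      have hG' : Integrable (fun z : X × (Fin n → X) => G (e.symm z)) ((ν 0).prod PP') := by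
        have : (fun z : X × (Fin n → X) => G (e.symm z))
            = fun z => G (Fin.cons z.1 z.2) := funext fun z => by rw [he, mcd_cons_eq]
        rw [this]; exact hG
      rw [h1, integral_prod_symm _ hG']
      simp_rw [he, mcd_cons_eq]
    have hsm : StronglyMeasurable (fun z : X × (Fin n → X) => f (Fin.cons z.1 z.2)) :=
      (hf.comp mcd_cons_measurable).stronglyMeasurable
    have hint_f : Integrable (fun z : X × (Fin n → X) => f (Fin.cons z.1 z.2)) ((ν 0).prod PP') :=
      ⟨hsm.aestronglyMeasurable, HasFiniteIntegral.of_bounded (C := B)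
        (ae_of_all _ fun z => by rw [Real.norm_eq_abs]; exact hfb _)⟩
    have hsm_exp : StronglyMeasurable
        (fun z : X × (Fin n → X) => Real.exp (t * f (Fin.cons z.1 z.2))) :=
      (Real.measurable_exp.comp ((hf.comp mcd_cons_measurable).const_mul t)).stronglyMeasurable
    have hexp_bd : ∀ v : Fin (n + 1) → X, Real.exp (t * f v) ≤ Real.exp (|t| * B) := by
      intro v
      apply Real.exp_le_exp.2
      calc t * f v ≤ |t * f v| := le_abs_self _
        _ = |t| * |f v| := abs_mul _ _
        _ ≤ |t| * B := mul_le_mul_of_nonneg_left (hfb v) (abs_nonneg t)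
    have hint_exp : Integrable (fun z : X × (Fin n → X) => Real.exp (t * f (Fin.cons z.1 z.2)))
        ((ν 0).prod PP') :=
      ⟨hsm_exp.aestronglyMeasurable, HasFiniteIntegral.of_bounded (C := Real.exp (|t| * B))
        (ae_of_all _ fun z => by
          rw [Real.norm_eq_abs, Real.abs_exp]; exact hexp_bd _)⟩
    -- the conditional mean
    set h : (Fin n → X) → ℝ := fun y => ∫ ξ, f (Fin.cons ξ y) ∂(ν 0) with hh
    have hh_sm : StronglyMeasurable h := hsm.integral_prod_left'
    have hfint : ∀ y, Integrable (fun ξ => f (Fin.cons ξ y)) (ν 0) := by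
      intro y
      refine ⟨(hf.comp (mcd_cons_measurable.comp
        (measurable_id.prodMk measurable_const))).aestronglyMeasurable,
        HasFiniteIntegral.of_bounded (C := B) (ae_of_all _ fun ξ => ?_)⟩
      rw [Real.norm_eq_abs]; exact hfb _
    have hh_bd : ∀ y, |h y| ≤ B := by
      intro y
      rw [hh, ← Real.norm_eq_abs]
      calc ‖∫ ξ, f (Fin.cons ξ y) ∂(ν 0)‖ ≤ B * ((ν 0) Set.univ).toReal :=
        norm_integral_le_of_norm_le_const (ae_of_all _ fun ξ => by
          rw [Real.norm_eq_abs]; exact hfb _)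
        _ = B := by simp
    have hh_bdd : ∀ (j : Fin n) (y : Fin n → X) (ξ : X),
        |h y - h (Function.update y j ξ)| ≤ c j.succ := by
      intro j y ξ
      have hcons : ∀ ξ₀ : X, (Fin.cons ξ₀ (Function.update y j ξ) : Fin (n + 1) → X)
          = Function.update (Fin.cons ξ₀ y : Fin (n + 1) → X) j.succ ξ :=
        fun ξ₀ => @Fin.cons_update n (fun _ => X) ξ₀ y j ξ
      have heq : h y - h (Function.update y j ξ)
          = ∫ ξ₀, (f (Fin.cons ξ₀ y) - f (Fin.cons ξ₀ (Function.update y j ξ))) ∂(ν 0) := by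
        rw [hh, integral_sub (hfint y) (hfint _)]
      rw [heq, ← Real.norm_eq_abs]
      calc ‖∫ ξ₀, (f (Fin.cons ξ₀ y) - f (Fin.cons ξ₀ (Function.update y j ξ))) ∂(ν 0)‖
          ≤ c j.succ * ((ν 0) Set.univ).toReal := by
            apply norm_integral_le_of_norm_le_const (ae_of_all _ fun ξ₀ => ?_)
            rw [Real.norm_eq_abs, hcons ξ₀]
            exact hbdd j.succ (Fin.cons ξ₀ y) ξ
        _ = c j.succ := by simp
    have hc0 : 0 ≤ c 0 := by
      simpa using hbdd 0 (fun _ => Classical.arbitrary X) (Classical.arbitrary X)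
    -- inner Hoeffding bound
    have inner : ∀ y : Fin n → X, ∫ ξ, Real.exp (t * f (Fin.cons ξ y)) ∂(ν 0)
        ≤ Real.exp (t * h y + t ^ 2 * (c 0) ^ 2 / 8) := by
      intro y
      apply mcd_hoeffding (ν 0) (fun ξ => f (Fin.cons ξ y))
        (hf.comp (mcd_cons_measurable.comp (measurable_id.prodMk measurable_const)))
      intro ξ₁ ξ₂
      have : (Fin.cons ξ₂ y : Fin (n + 1) → X)
          = Function.update (Fin.cons ξ₁ y : Fin (n + 1) → X) 0 ξ₂ :=
        (@Fin.update_cons_zero n (fun _ => X) ξ₁ y ξ₂).symm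
      rw [this]
      exact hbdd 0 (Fin.cons ξ₁ y) ξ₂
    -- integrate the inner bound
    have hLint : Integrable (fun y => ∫ ξ, Real.exp (t * f (Fin.cons ξ y)) ∂(ν 0)) PP' := by
      refine ⟨hsm_exp.integral_prod_left'.aestronglyMeasurable,
        HasFiniteIntegral.of_bounded (C := Real.exp (|t| * B)) (ae_of_all _ fun y => ?_)⟩
      rw [Real.norm_eq_abs]
      calc |∫ ξ, Real.exp (t * f (Fin.cons ξ y)) ∂(ν 0)|
          ≤ Real.exp (|t| * B) * ((ν 0) Set.univ).toReal := by
            rw [← Real.norm_eq_abs]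
            apply norm_integral_le_of_norm_le_const (ae_of_all _ fun ξ => ?_)
            rw [Real.norm_eq_abs, Real.abs_exp]; exact hexp_bd _
        _ = Real.exp (|t| * B) := by simp
    have hRint : Integrable (fun y => Real.exp (t * h y + t ^ 2 * (c 0) ^ 2 / 8)) PP' := by
      refine ⟨(Real.measurable_exp.comp
        ((hh_sm.measurable.const_mul t).add_const _)).aestronglyMeasurable,
        HasFiniteIntegral.of_bounded (C := Real.exp (|t| * B + t ^ 2 * (c 0) ^ 2 / 8))
        (ae_of_all _ fun y => ?_)⟩
      rw [Real.norm_eq_abs, Real.abs_exp]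
      apply Real.exp_le_exp.2
      have h2 : t * h y ≤ |t| * B := by
        calc t * h y ≤ |t * h y| := le_abs_self _
          _ = |t| * |h y| := abs_mul _ _
          _ ≤ |t| * B := mul_le_mul_of_nonneg_left (hh_bd y) (abs_nonneg t)
      exact add_le_add_left h2 _
    have step1 : ∫ v, Real.exp (t * f v) ∂PP
        = ∫ y, ∫ ξ, Real.exp (t * f (Fin.cons ξ y)) ∂(ν 0) ∂PP' :=
      trans _ hint_exp
    have step2 : ∫ y, ∫ ξ, Real.exp (t * f (Fin.cons ξ y)) ∂(ν 0) ∂PP'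
        ≤ ∫ y, Real.exp (t * h y + t ^ 2 * (c 0) ^ 2 / 8) ∂PP' :=
      integral_mono hLint hRint inner
    have step3 : ∫ y, Real.exp (t * h y + t ^ 2 * (c 0) ^ 2 / 8) ∂PP'
        = Real.exp (t ^ 2 * (c 0) ^ 2 / 8) * ∫ y, Real.exp (t * h y) ∂PP' := by
      simp_rw [Real.exp_add]
      rw [integral_mul_const]
      ring
    have step4 : ∫ y, Real.exp (t * h y) ∂PP'
        ≤ Real.exp (t * ∫ y, h y ∂PP' + t ^ 2 * (∑ j : Fin n, (c j.succ) ^ 2) / 8) :=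
      ih ν' h hh_sm.measurable (fun j => c j.succ) hh_bdd t
    have hEf : ∫ v, f v ∂PP = ∫ y, h y ∂PP' := trans _ hint_f
    have hsum : (∑ i : Fin (n + 1), (c i) ^ 2)
        = (c 0) ^ 2 + ∑ j : Fin n, (c j.succ) ^ 2 := Fin.sum_univ_succ _
    calc ∫ v, Real.exp (t * f v) ∂PP
        ≤ Real.exp (t ^ 2 * (c 0) ^ 2 / 8) * ∫ y, Real.exp (t * h y) ∂PP' := by
          rw [step1, ← step3]; exact step2
      _ ≤ Real.exp (t ^ 2 * (c 0) ^ 2 / 8)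
            * Real.exp (t * ∫ y, h y ∂PP' + t ^ 2 * (∑ j : Fin n, (c j.succ) ^ 2) / 8) :=
          mul_le_mul_of_nonneg_left step4 (Real.exp_nonneg _)
      _ = Real.exp (t * ∫ v, f v ∂PP + t ^ 2 * (∑ i, (c i) ^ 2) / 8) := by
          rw [← Real.exp_add, hEf, hsum]; ring_nf
/-- McDiarmid's bounded differences inequality: if `f` has bounded differences with
constants `c i` and the coordinates of `X` are independent, then
`P(f(X) - E[f(X)] > ε) ≤ exp(-2ε²/Σ cᵢ²)`. -/
theorem stmt_14 {Ω : Type*} [MeasurableSpace Ω] (μ : Measure Ω) [IsProbabilityMeasure μ]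
    {X : Type*} [MeasurableSpace X] (m : ℕ) (hm : 0 < m)
    (x : Fin m → Ω → X) (hmeas : ∀ i, Measurable (x i))
    (hindep : iIndepFun x μ)
    (f : (Fin m → X) → ℝ) (hf : Measurable f)
    (hint : Integrable (fun ω => f (fun i => x i ω)) μ)
    (c : Fin m → ℝ)
    (hbdd : ∀ (i : Fin m) (v : Fin m → X) (ξ : X),
      |f v - f (Function.update v i ξ)| ≤ c i)
    (ε : ℝ) (hε : 0 < ε) :
    μ {ω | f (fun i => x i ω) - ∫ ω', f (fun i => x i ω') ∂μ > ε}
      ≤ ENNReal.ofReal (Real.exp (-2 * ε ^ 2 / ∑ i, (c i) ^ 2)) := by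
  classical
  set S := ∑ i, (c i) ^ 2 with hS
  have hS0 : 0 ≤ S := Finset.sum_nonneg fun i _ => sq_nonneg _
  rcases eq_or_lt_of_le hS0 with hSz | hSpos
  · calc μ {ω | f (fun i => x i ω) - ∫ ω', f (fun i => x i ω') ∂μ > ε} ≤ 1 := prob_le_one
      _ = ENNReal.ofReal (Real.exp (-2 * ε ^ 2 / S)) := by
          rw [← hSz, div_zero, Real.exp_zero, ENNReal.ofReal_one]
  · set t := 4 * ε / S with ht
    have ht0 : 0 < t := by positivity
    haveI : Nonempty Ω := by
      rcases isEmpty_or_nonempty Ω with h | h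
      · have h1 : μ Set.univ = 1 := measure_univ
        rw [Set.univ_eq_empty_iff.2 h, measure_empty] at h1
        exact absurd h1 (by norm_num)
      · exact h
    haveI : Nonempty X := ⟨x ⟨0, hm⟩ (Classical.arbitrary Ω)⟩
    set ν : Fin m → Measure X := fun i => μ.map (x i) with hν
    haveI hνp : ∀ i, IsProbabilityMeasure (ν i) := fun i =>
      Measure.isProbabilityMeasure_map (hmeas i).aemeasurable
    set XX : Ω → (Fin m → X) := fun ω i => x i ω with hXX
    have hXXm : Measurable XX := measurable_pi_lambda _ hmeas
    have hmap : μ.map XX = Measure.pi ν := by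
      refine (Measure.pi_eq fun A hA => ?_).symm
      rw [Measure.map_apply hXXm (MeasurableSet.univ_pi hA)]
      have hpre : XX ⁻¹' (Set.pi Set.univ A) = ⋂ i, x i ⁻¹' A i := by
        ext ω; simp [hXX, Set.mem_pi]
      rw [hpre, hindep.meas_iInter (fun i => ⟨A i, hA i, rfl⟩)]
      exact Finset.prod_congr rfl fun i _ => (Measure.map_apply (hmeas i) (hA i)).symm
    set K := ∫ ω', f (fun i => x i ω') ∂μ with hK
    have hKeq : ∫ v, f v ∂(Measure.pi ν) = K := by
      rw [← hmap, integral_map hXXm.aemeasurable hf.aestronglyMeasurable]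
    -- global bound on f
    set B := |f (fun _ => Classical.arbitrary X)| + ∑ i, c i with hB
    have hfb : ∀ v, |f v| ≤ B := by
      intro v
      have := mcd_osc_finset f c hbdd Finset.univ v (fun _ => Classical.arbitrary X)
        (fun i hi => absurd (Finset.mem_univ i) hi)
      calc |f v| = |(f v - f (fun _ => Classical.arbitrary X))
            + f (fun _ => Classical.arbitrary X)| := by ring_nf
        _ ≤ |f v - f (fun _ => Classical.arbitrary X)|
            + |f (fun _ => Classical.arbitrary X)| := abs_add_le _ _
        _ ≤ B := by rw [hB]; linarith
    set Y : Ω → ℝ := fun ω => f (XX ω) - K with hY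
    have hYm : Measurable Y := (hf.comp hXXm).sub measurable_const
    have hintY : Integrable (fun ω => Real.exp (t * Y ω)) μ := by
      refine ⟨(Real.measurable_exp.comp (hYm.const_mul t)).aestronglyMeasurable,
        HasFiniteIntegral.of_bounded (C := Real.exp (|t| * (B + |K|)))
          (ae_of_all _ fun ω => ?_)⟩
      rw [Real.norm_eq_abs, Real.abs_exp]
      apply Real.exp_le_exp.2
      have hy : |Y ω| ≤ B + |K| := by
        calc |Y ω| ≤ |f (XX ω)| + |K| := abs_sub _ _
          _ ≤ B + |K| := by linarith [hfb (XX ω)]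
      calc t * Y ω ≤ |t * Y ω| := le_abs_self _
        _ = |t| * |Y ω| := abs_mul _ _
        _ ≤ |t| * (B + |K|) := mul_le_mul_of_nonneg_left hy (abs_nonneg t)
    have chernoff := measure_ge_le_exp_mul_mgf (X := Y) (μ := μ) ε (le_of_lt ht0) hintY
    have hmgf : mgf Y μ t ≤ Real.exp (t ^ 2 * S / 8) := by
      have h1 : mgf Y μ t = (∫ ω, Real.exp (t * f (XX ω)) ∂μ) * Real.exp (-t * K) := by
        rw [show mgf Y μ t = ∫ ω, Real.exp (t * Y ω) ∂μ from rfl, ← integral_mul_const]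
        congr 1; funext ω
        rw [← Real.exp_add]
        congr 1
        rw [hY]; ring
      have h2 : ∫ ω, Real.exp (t * f (XX ω)) ∂μ = ∫ v, Real.exp (t * f v) ∂(Measure.pi ν) := by
        rw [← hmap, integral_map hXXm.aemeasurable
          (Measurable.aestronglyMeasurable (by exact (hf.const_mul t).exp))]
      have h3 := mcd_mgf m ν f hf c hbdd t
      rw [hKeq] at h3
      rw [h1, h2]
      calc (∫ v, Real.exp (t * f v) ∂(Measure.pi ν)) * Real.exp (-t * K)
          ≤ Real.exp (t * K + t ^ 2 * S / 8) * Real.exp (-t * K) :=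
            mul_le_mul_of_nonneg_right h3 (Real.exp_nonneg _)
        _ = Real.exp (t ^ 2 * S / 8) := by rw [← Real.exp_add]; ring_nf
    have hexp : Real.exp (-t * ε) * Real.exp (t ^ 2 * S / 8) = Real.exp (-2 * ε ^ 2 / S) := by
      rw [← Real.exp_add]
      congr 1
      rw [ht]
      field_simp
      ring
    have hfinal : (μ {ω | ε ≤ Y ω}).toReal ≤ Real.exp (-2 * ε ^ 2 / S) := by
      calc (μ {ω | ε ≤ Y ω}).toReal ≤ Real.exp (-t * ε) * mgf Y μ t := chernoff
        _ ≤ Real.exp (-t * ε) * Real.exp (t ^ 2 * S / 8) :=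
            mul_le_mul_of_nonneg_left hmgf (Real.exp_nonneg _)
        _ = Real.exp (-2 * ε ^ 2 / S) := hexp
    have hsub : {ω | f (fun i => x i ω) - ∫ ω', f (fun i => x i ω') ∂μ > ε}
        ⊆ {ω | ε ≤ Y ω} := by
      intro ω hω
      simp only [Set.mem_setOf_eq] at hω ⊢
      exact le_of_lt hω
    calc μ {ω | f (fun i => x i ω) - ∫ ω', f (fun i => x i ω') ∂μ > ε}
        ≤ μ {ω | ε ≤ Y ω} := measure_mono hsub
      _ ≤ ENNReal.ofReal (Real.exp (-2 * ε ^ 2 / S)) :=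
          (ENNReal.le_ofReal_iff_toReal_le (measure_ne_top _ _) (Real.exp_nonneg _)).2 hfinal
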